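/- Suppose the supervised influence function ψ_SUP and semi-supervised influence function ψ_SSL of the Q-learning parameter estimator satisfy ψ_SSL(L; θ̄) = ψ_SUP(L; θ̄) − E(U), where the random vector E(U) depends only on the unlabeled-data features U and satisfies the orthogonality constraint E[(ψ_SUP(L; θ̄) − E(U)) E(U)ᵀ] = 0. Then the asymptotic variances V_SSL = Σ^{-1} E[ψ_SSL ψ_SSLᵀ] (Σ^{-1})ᵀ and V_SUP = Σ^{-1} E[ψ_SUP ψ_SUPᵀ](Σ^{-1})ᵀ satisfy V_SSL = V_SUP − Σ^{-1} Var[ψ_SUP − ψ_SSL] (Σ^{-1})ᵀ. In particular V_SSL ⪯ V_SUP in the positive semidefinite order. -/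

import Mathlib

/-!
Substituting `ψ_SSL = ψ_SUP − E` and expanding, the cross terms of `𝔼[ψ_SSL ψ_SSLᵀ]` are the
orthogonality integrals `𝔼[(ψ_SUP − E) Eᵀ] = 0`, so `𝔼[ψ_SSL ψ_SSLᵀ] = 𝔼[ψ_SUP ψ_SUPᵀ] − 𝔼[E Eᵀ]`
with `E = ψ_SUP − ψ_SSL`; conjugating by `Σ⁻¹` gives the identity. The gap `Σ⁻¹ 𝔼[E Eᵀ] Σ⁻ᵀ` is a
congruence of a second moment matrix, which is positive semidefinite because its quadratic form
at `x` is `𝔼[(xᵀE)²] ≥ 0`.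
-/

open MeasureTheory Matrix

section SecondMoment

variable {Ω ι : Type*} [MeasurableSpace Ω] {μ : Measure Ω}

noncomputable def secondMomentMatrix (μ : Measure Ω) (X : Ω → ι → ℝ) : Matrix ι ι ℝ :=
  Matrix.of fun i j => ∫ ω, X ω i * X ω j ∂μ

lemma secondMomentMatrix_sub_of_orthogonal {X E : Ω → ι → ℝ}
    (hX : ∀ i, MemLp (fun ω => X ω i) 2 μ) (hE : ∀ i, MemLp (fun ω => E ω i) 2 μ)
    (horth : ∀ i j, ∫ ω, (X ω i - E ω i) * E ω j ∂μ = 0) :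
    secondMomentMatrix μ (X - E) = secondMomentMatrix μ X - secondMomentMatrix μ E := by
  ext i j
  have hXE : ∀ i, MemLp (fun ω => X ω i - E ω i) 2 μ := fun i => (hX i).sub (hE i)
  have hexpand : (fun ω => (X - E) ω i * (X - E) ω j) = fun ω =>
      X ω i * X ω j - E ω i * E ω j - (X ω i - E ω i) * E ω j - (X ω j - E ω j) * E ω i := by
    funext ω
    simp only [Pi.sub_apply]
    ring
  have hXX : Integrable (fun ω => X ω i * X ω j) μ := (hX i).integrable_mul (hX j)
  have hEE : Integrable (fun ω => E ω i * E ω j) μ := (hE i).integrable_mul (hE j)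
  have hXEj : Integrable (fun ω => (X ω i - E ω i) * E ω j) μ := (hXE i).integrable_mul (hE j)
  have hXEi : Integrable (fun ω => (X ω j - E ω j) * E ω i) μ := (hXE j).integrable_mul (hE i)
  simp only [secondMomentMatrix, Matrix.sub_apply, Matrix.of_apply, hexpand]
  rw [integral_sub _ hXEi, integral_sub _ hXEj, integral_sub hXX hEE, horth, horth, sub_zero,
    sub_zero]
  exacts [hXX.sub hEE, (hXX.sub hEE).sub hXEj]

variable [Fintype ι]

lemma dotProduct_secondMomentMatrix_mulVec {X : Ω → ι → ℝ}
    (hX : ∀ i, MemLp (fun ω => X ω i) 2 μ) (x : ι → ℝ) :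
    x ⬝ᵥ (secondMomentMatrix μ X *ᵥ x) = ∫ ω, (x ⬝ᵥ X ω) ^ 2 ∂μ := by
  have hint : ∀ i j, Integrable (fun ω => x i * X ω i * (x j * X ω j)) μ := fun i j =>
    ((hX i).const_mul (x i)).integrable_mul ((hX j).const_mul (x j))
  simp_rw [sq, dotProduct, Finset.sum_mul_sum]
  rw [integral_finsetSum _ fun i _ => integrable_finsetSum _ fun j _ => hint i j]
  refine Finset.sum_congr rfl fun i _ => ?_
  rw [integral_finsetSum _ fun j _ => hint i j, mulVec, dotProduct, Finset.mul_sum]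
  refine Finset.sum_congr rfl fun j _ => ?_
  rw [secondMomentMatrix, Matrix.of_apply, ← integral_mul_const, ← integral_const_mul]
  congr 1 with ω
  ring

lemma posSemidef_secondMomentMatrix {X : Ω → ι → ℝ}
    (hX : ∀ i, MemLp (fun ω => X ω i) 2 μ) : (secondMomentMatrix μ X).PosSemidef := by
  refine .of_dotProduct_mulVec_nonneg ?_ fun x => ?_
  · ext i j
    simp only [secondMomentMatrix, conjTranspose_apply, of_apply, star_trivial, mul_comm]
  · rw [star_trivial, dotProduct_secondMomentMatrix_mulVec hX]
    exact integral_nonneg fun ω => sq_nonneg _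

end SecondMoment

theorem statement6_general {Ω : Type*} [MeasurableSpace Ω] {p : ℕ}
    (μ : Measure Ω)
    (ψSUP ψSSL Err : Ω → Fin p → ℝ)
    (Sig : Matrix (Fin p) (Fin p) ℝ)
    (hL2SUP : ∀ i, MemLp (fun ω => ψSUP ω i) 2 μ)
    (hL2E : ∀ i, MemLp (fun ω => Err ω i) 2 μ)
    (hdef : ∀ ω, ψSSL ω = ψSUP ω - Err ω)
    (horth : ∀ i j, ∫ ω, (ψSUP ω i - Err ω i) * Err ω j ∂μ = 0) :
    (Sig⁻¹ * (Matrix.of fun i j => ∫ ω, ψSSL ω i * ψSSL ω j ∂μ) * (Sig⁻¹).transpose =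
      Sig⁻¹ * (Matrix.of fun i j => ∫ ω, ψSUP ω i * ψSUP ω j ∂μ) * (Sig⁻¹).transpose -
      Sig⁻¹ * (Matrix.of fun i j =>
        ∫ ω, (ψSUP ω i - ψSSL ω i) * (ψSUP ω j - ψSSL ω j) ∂μ) * (Sig⁻¹).transpose) ∧
    (Sig⁻¹ * (Matrix.of fun i j => ∫ ω, ψSUP ω i * ψSUP ω j ∂μ) * (Sig⁻¹).transpose -
      Sig⁻¹ * (Matrix.of fun i j => ∫ ω, ψSSL ω i * ψSSL ω j ∂μ) *
        (Sig⁻¹).transpose).PosSemidef := by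
  have hSSL : ψSSL = ψSUP - Err := funext hdef
  have hdiff : ψSUP - ψSSL = Err := by rw [hSSL, sub_sub_cancel]
  have hmoment := secondMomentMatrix_sub_of_orthogonal hL2SUP hL2E horth
  rw [← hSSL] at hmoment
  change Sig⁻¹ * secondMomentMatrix μ ψSSL * _ =
      Sig⁻¹ * secondMomentMatrix μ ψSUP * _ - Sig⁻¹ * secondMomentMatrix μ (ψSUP - ψSSL) * _ ∧
    (Sig⁻¹ * secondMomentMatrix μ ψSUP * _ - Sig⁻¹ * secondMomentMatrix μ ψSSL * _).PosSemidef
  rw [hdiff, hmoment, Matrix.mul_sub, Matrix.sub_mul, sub_sub_cancel]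
  refine ⟨rfl, ?_⟩
  simpa only [conjTranspose_eq_transpose_of_trivial] using
    (posSemidef_secondMomentMatrix hL2E).mul_mul_conjTranspose_same Sig⁻¹

/-- Proposition 3.2: if the semi-supervised influence function satisfies
`ψ_SSL = ψ_SUP − E` with `E[(ψ_SUP − E) Eᵀ] = 0`, then the asymptotic variances
`V = Σ⁻¹ E[ψψᵀ] Σ⁻ᵀ` satisfy `V_SSL = V_SUP − Σ⁻¹ Var[ψ_SUP − ψ_SSL] Σ⁻ᵀ`; in particular
`V_SUP − V_SSL` is positive semidefinite. -/
theorem statement6 {Ω : Type*} [MeasurableSpace Ω] {p : ℕ}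
    (μ : Measure Ω) [IsProbabilityMeasure μ]
    (ψSUP ψSSL Err : Ω → Fin p → ℝ)
    (Sig : Matrix (Fin p) (Fin p) ℝ) (hSig : IsUnit Sig.det)
    (hL2SUP : ∀ i, MemLp (fun ω => ψSUP ω i) 2 μ)
    (hL2E : ∀ i, MemLp (fun ω => Err ω i) 2 μ)
    (hdef : ∀ ω, ψSSL ω = ψSUP ω - Err ω)
    (hmean : ∀ i, ∫ ω, ψSUP ω i ∂μ = 0)
    (hmeanE : ∀ i, ∫ ω, Err ω i ∂μ = 0)
    (horth : ∀ i j, ∫ ω, (ψSUP ω i - Err ω i) * Err ω j ∂μ = 0) :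
    (Sig⁻¹ * (Matrix.of fun i j => ∫ ω, ψSSL ω i * ψSSL ω j ∂μ) * (Sig⁻¹).transpose =
      Sig⁻¹ * (Matrix.of fun i j => ∫ ω, ψSUP ω i * ψSUP ω j ∂μ) * (Sig⁻¹).transpose -
      Sig⁻¹ * (Matrix.of fun i j =>
        ∫ ω, (ψSUP ω i - ψSSL ω i) * (ψSUP ω j - ψSSL ω j) ∂μ) * (Sig⁻¹).transpose) ∧
    (Sig⁻¹ * (Matrix.of fun i j => ∫ ω, ψSUP ω i * ψSUP ω j ∂μ) * (Sig⁻¹).transpose -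
      Sig⁻¹ * (Matrix.of fun i j => ∫ ω, ψSSL ω i * ψSSL ω j ∂μ) *
        (Sig⁻¹).transpose).PosSemidef :=
  statement6_general μ ψSUP ψSSL Err Sig hL2SUP hL2E hdef horth
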